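/- arXiv:2212.05176 — 5 statements merged into one kernel-verified Lean document; each statement's English description precedes it below -/
import Mathlib

section
/- For every integer t with 1 ≤ t ≤ n and every real δ with 0 < δ < 1/2, the probability that y_t > δ·t/n is at least 1 − δ. -/
open MeasureTheory ProbabilityTheory Finset
open scoped ENNReal

/-! The event `y_t ≤ a` forces at least `t` of the `x_i` to be `≤ a`, and each `x_i ≤ a` has
probability at most `a`. By Markov's inequality for the number of such indices, the event has
probability at most `n a / t`, which is `δ` for `a = δ t / n`. -/

theorem natCast_mul_measure_le_card_le_sum_measure {Ω ι : Type*} [MeasurableSpace Ω]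
    {μ : Measure Ω} [Fintype ι] (A : ι → Set Ω) [∀ i ω, Decidable (ω ∈ A i)]
    (hA : ∀ i, NullMeasurableSet (A i) μ) (k : ℕ) :
    k * μ {ω | k ≤ #{i | ω ∈ A i}} ≤ ∑ i, μ (A i) := by
  have hcount : ∀ ω, (#{i | ω ∈ A i} : ℝ≥0∞) = ∑ i, (A i).indicator 1 ω := fun ω => by
    simp only [Set.indicator_apply, Pi.one_apply, sum_boole]
  have hmeas : ∀ i ∈ (univ : Finset ι), AEMeasurable ((A i).indicator (1 : Ω → ℝ≥0∞)) μ :=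
    fun i _ => aemeasurable_const.indicator₀ (hA i)
  calc (k : ℝ≥0∞) * μ {ω | k ≤ #{i | ω ∈ A i}}
      = k * μ {ω | (k : ℝ≥0∞) ≤ ∑ i, (A i).indicator 1 ω} := by simp_rw [← hcount, Nat.cast_le]
    _ ≤ ∫⁻ ω, ∑ i, (A i).indicator 1 ω ∂μ :=
      mul_meas_ge_le_lintegral₀ (Finset.aemeasurable_fun_sum _ hmeas) _
    _ = ∑ i, μ (A i) := by
      rw [lintegral_finsetSum' _ hmeas]
      simp_rw [lintegral_indicator_one₀ (hA _)]

theorem measure_setOf_le_le_ofReal_of_map_eq_uniform {Ω : Type*} [MeasurableSpace Ω] {μ : Measure Ω}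
    {X : Ω → ℝ} (hX : μ.map X = volume.restrict (Set.Icc 0 1)) (a : ℝ) :
    μ {ω | X ω ≤ a} ≤ ENNReal.ofReal a := by
  have hXm : AEMeasurable X μ := .of_map_ne_zero (by simp [hX])
  calc μ {ω | X ω ≤ a} = volume (Set.Iic a ∩ Set.Icc 0 1) := by
        rw [← Measure.restrict_apply measurableSet_Iic, ← hX,
          Measure.map_apply₀ hXm measurableSet_Iic.nullMeasurableSet]
        rfl
    _ ≤ volume (Set.Icc 0 a) := measure_mono fun x hx => ⟨hx.2.1, hx.1⟩
    _ = ENNReal.ofReal a := by simp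

theorem add_one_le_card_le_of_monotone_perm {α : Type*} [LinearOrder α] {n : ℕ}
    {x y : Fin n → α} (hy : Monotone y) (σ : Equiv.Perm (Fin n)) (hσ : ∀ i, y i = x (σ i))
    (k : Fin n) : (k : ℕ) + 1 ≤ #{i | x i ≤ y k} := by
  calc (k : ℕ) + 1 = #((Iic k).map σ.toEmbedding) := by rw [card_map, Fin.card_Iic]
    _ ≤ #{i | x i ≤ y k} := card_le_card fun i hi => by
      obtain ⟨j, hj, rfl⟩ := mem_map.mp hi
      simpa [← hσ] using hy (mem_Iic.mp hj)

theorem natCast_add_one_mul_measure_le_le_of_sorted_uniform {Ω : Type*} [MeasurableSpace Ω]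
    {μ : Measure Ω} {n : ℕ} {X Y : Fin n → Ω → ℝ}
    (hunif : ∀ i, μ.map (X i) = volume.restrict (Set.Icc 0 1))
    (hsorted : ∀ ω, Monotone fun i => Y i ω)
    (hperm : ∀ ω, ∃ σ : Equiv.Perm (Fin n), ∀ i, Y i ω = X (σ i) ω) (k : Fin n) (a : ℝ) :
    ((k : ℕ) + 1 : ℝ≥0∞) * μ {ω | Y k ω ≤ a} ≤ n * ENNReal.ofReal a := by
  have hXm : ∀ i, AEMeasurable (X i) μ := fun i => .of_map_ne_zero (by simp [hunif i])
  have hcount : {ω | Y k ω ≤ a} ⊆ {ω | (k : ℕ) + 1 ≤ #{i | X i ω ≤ a}} := fun ω hω => by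
    obtain ⟨σ, hσ⟩ := hperm ω
    calc (k : ℕ) + 1 ≤ #{i | X i ω ≤ Y k ω} :=
          add_one_le_card_le_of_monotone_perm (hsorted ω) σ hσ k
      _ ≤ #{i | X i ω ≤ a} := card_le_card (monotone_filter_right _ fun i _ h => h.trans hω)
  calc ((k : ℕ) + 1 : ℝ≥0∞) * μ {ω | Y k ω ≤ a}
      ≤ ((k + 1 : ℕ) : ℝ≥0∞) * μ {ω | (k : ℕ) + 1 ≤ #{i | X i ω ≤ a}} := by
        push_cast
        gcongr
    _ ≤ ∑ i, μ {ω | X i ω ≤ a} :=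
        natCast_mul_measure_le_card_le_sum_measure (fun i => {ω | X i ω ≤ a})
          (fun i => (hXm i).nullMeasurable measurableSet_Iic) _
    _ ≤ ∑ _i : Fin n, ENNReal.ofReal a :=
        sum_le_sum fun i _ => measure_setOf_le_le_ofReal_of_map_eq_uniform (hunif i) a
    _ = n * ENNReal.ofReal a := by simp

/-- Let `X 0, …, X (n-1)` be i.i.d. uniform on `[0,1]` and let
`Y` be their order statistics (`Y` is pointwise monotone and a rearrangement of `X`).
For every integer `t` with `1 ≤ t ≤ n` and every real `δ` with `0 < δ < 1/2`,
`Pr[y_t > δ·t/n] ≥ 1 − δ`. -/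
theorem stmt_0
    {Ω : Type*} [MeasurableSpace Ω] {μ : Measure Ω} [IsProbabilityMeasure μ]
    {n : ℕ}
    (X Y : Fin n → Ω → ℝ)
    (hunif : ∀ i, Measure.map (X i) μ = volume.restrict (Set.Icc (0 : ℝ) 1))
    (hsorted : ∀ ω, Monotone fun i => Y i ω)
    (hperm : ∀ ω, ∃ σ : Equiv.Perm (Fin n), ∀ i, Y i ω = X (σ i) ω)
    (t : ℕ) (ht1 : 1 ≤ t) (ht2 : t ≤ n)
    (δ : ℝ) (hδ0 : 0 < δ) :
    ENNReal.ofReal (1 - δ) ≤ μ {ω | δ * t / n < Y ⟨t - 1, by omega⟩ ω} := by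
  set k : Fin n := ⟨t - 1, by omega⟩
  set a := δ * t / n
  have hbad : μ {ω | a < Y k ω}ᶜ ≤ ENNReal.ofReal δ := by
    have hkt : ((k : ℕ) + 1 : ℝ≥0∞) = t := by norm_cast; simp only [k]; omega
    have hcompl : {ω | a < Y k ω}ᶜ = {ω | Y k ω ≤ a} := by ext; simp
    have hna : (n : ℝ≥0∞) * ENNReal.ofReal a = t * ENNReal.ofReal δ := by
      have hn : (n : ℝ) ≠ 0 := by norm_cast; omega
      rw [← ENNReal.ofReal_natCast, ← ENNReal.ofReal_mul (by positivity), ← ENNReal.ofReal_natCast,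
        ← ENNReal.ofReal_mul (by positivity)]
      congr 1
      simp only [a]
      field_simp
    have ht0 : (t : ℝ≥0∞) ≠ 0 := by simp; omega
    refine (ENNReal.mul_le_mul_iff_right ht0 (ENNReal.natCast_ne_top t)).mp ?_
    rw [hcompl, ← hna, ← hkt]
    exact natCast_add_one_mul_measure_le_le_of_sorted_uniform hunif hsorted hperm k a
  calc ENNReal.ofReal (1 - δ) = 1 - ENNReal.ofReal δ := by
        rw [ENNReal.ofReal_sub _ hδ0.le, ENNReal.ofReal_one]
    _ ≤ 1 - μ {ω | a < Y k ω}ᶜ := tsub_le_tsub_left hbad 1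
    _ ≤ μ {ω | a < Y k ω} :=
        tsub_le_iff_right.mpr (by simpa using measure_univ_le_add_compl (μ := μ) {ω | a < Y k ω})
end

section
/- Fix any real α with 4 < α < n/2 and any integer t with 1 ≤ t ≤ n/2. Then the probability that y_{t+1} < y_t + α/n is at least 1 − exp(−α/4). -/
/-!
If `y (k+1) ≥ y k + s`, then the sample point `X i` realizing `y k` has a set `A` of exactly `k`
other points at or below it, and every remaining point lies at least `s` above it. Conditioning on
`X i = c`, this configuration has probability
`∫₀^{1-s} c^k (1-s-c)^(n-1-k) dc = (1-s)^n k! (n-1-k)! / n!` (a Beta integral), and there are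
`n · C(n-1, k)` choices of `(i, A)`, so the union bound gives `P(y (k+1) ≥ y k + s) ≤ (1-s)^n`.
With `s = α/n` this is at most `exp (-α) ≤ exp (-α/4)`.
-/

open MeasureTheory ProbabilityTheory Finset
open scoped Nat

theorem integral_pow_mul_one_sub_pow (a b : ℕ) :
    ∫ x in (0 : ℝ)..1, x ^ a * (1 - x) ^ b = (a ! * b ! : ℝ) / (a + b + 1)! := by
  have hΓ := Complex.Gamma_mul_Gamma_eq_betaIntegral (s := a + 1) (t := b + 1)
    (by simp; positivity) (by simp; positivity)
  have hB : Complex.betaIntegral (a + 1) (b + 1) = ∫ x in (0 : ℝ)..1, x ^ a * (1 - x) ^ b := by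
    rw [Complex.betaIntegral, ← intervalIntegral.integral_ofReal]
    refine intervalIntegral.integral_congr fun x _ => ?_
    norm_num [← Complex.cpow_natCast]
  rw [show (a + 1 : ℂ) + (b + 1) = (a + b + 1 : ℕ) + 1 by push_cast; ring,
    Complex.Gamma_nat_eq_factorial, Complex.Gamma_nat_eq_factorial,
    Complex.Gamma_nat_eq_factorial, hB] at hΓ
  rw [eq_div_iff (by positivity)]
  exact_mod_cast (hΓ.trans (mul_comm _ _)).symm

theorem integral_pow_mul_sub_pow (a b : ℕ) (c : ℝ) :
    ∫ x in (0 : ℝ)..c, x ^ a * (c - x) ^ b = c ^ (a + b + 1) * (a ! * b ! / (a + b + 1)!) := by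
  have hscale := intervalIntegral.smul_integral_comp_mul_left
    (fun x => x ^ a * (c - x) ^ b) c (a := 0) (b := 1)
  have hsub : ∀ x, (c * x) ^ a * (c - c * x) ^ b = c ^ (a + b) * (x ^ a * (1 - x) ^ b) := by
    intro x
    rw [← mul_one_sub, mul_pow, mul_pow, pow_add]
    ring
  rw [mul_zero, mul_one] at hscale
  simp only [← hscale, hsub, intervalIntegral.integral_const_mul, integral_pow_mul_one_sub_pow,
    smul_eq_mul]
  ring

theorem setLIntegral_Icc_ofReal_pow_mul_ofReal_pow (k m : ℕ) (hm : m ≠ 0) {s : ℝ}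
    (hs0 : 0 ≤ s) (hs1 : s ≤ 1) :
    ∫⁻ c in Set.Icc 0 1, ENNReal.ofReal c ^ k * ENNReal.ofReal (1 - s - c) ^ m =
      ENNReal.ofReal ((1 - s) ^ (k + m + 1) * (k ! * m ! / (k + m + 1)!)) := by
  have hzero :
      ∫⁻ c in Set.Ioc (1 - s) 1, ENNReal.ofReal c ^ k * ENNReal.ofReal (1 - s - c) ^ m = 0 :=
    (setLIntegral_congr_fun measurableSet_Ioc fun c hc => by
      rw [ENNReal.ofReal_of_nonpos (p := 1 - s - c) (by linarith [hc.1]), zero_pow hm,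
        mul_zero]).trans lintegral_zero
  have hpos : ∫⁻ c in Set.Icc 0 (1 - s), ENNReal.ofReal c ^ k * ENNReal.ofReal (1 - s - c) ^ m =
      ∫⁻ c in Set.Icc 0 (1 - s), ENNReal.ofReal (c ^ k * (1 - s - c) ^ m) :=
    setLIntegral_congr_fun measurableSet_Icc fun c hc => by
      rw [ENNReal.ofReal_mul (pow_nonneg hc.1 k), ENNReal.ofReal_pow hc.1,
        ENNReal.ofReal_pow (by linarith [hc.2])]
  rw [← Set.Icc_union_Ioc_eq_Icc (by linarith : (0 : ℝ) ≤ 1 - s) (by linarith : 1 - s ≤ 1),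
    lintegral_union measurableSet_Ioc (Set.disjoint_left.2 fun c hc hc' => hc'.1.not_ge hc.2),
    hzero, add_zero, hpos, ← ofReal_integral_eq_lintegral_ofReal
      (by fun_prop : Continuous fun c : ℝ => c ^ k * (1 - s - c) ^ m).integrableOn_Icc
      ((ae_restrict_iff' measurableSet_Icc).2 (ae_of_all _ fun c hc =>
        mul_nonneg (pow_nonneg hc.1 k) (pow_nonneg (by linarith [hc.2]) m))),
    integral_Icc_eq_integral_Ioc, ← intervalIntegral.integral_of_le (by linarith),
    integral_pow_mul_sub_pow]

theorem volume_restrict_Icc_Iic {c : ℝ} (hc : c ≤ 1) :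
    volume.restrict (Set.Icc (0 : ℝ) 1) (Set.Iic c) = ENNReal.ofReal c := by
  have hinter : Set.Iic c ∩ Set.Icc 0 1 = Set.Icc 0 c := by ext; simp; grind
  rw [Measure.restrict_apply measurableSet_Iic, hinter, Real.volume_Icc, sub_zero]

theorem volume_restrict_Icc_Ici {d : ℝ} (hd : 0 ≤ d) :
    volume.restrict (Set.Icc (0 : ℝ) 1) (Set.Ici d) = ENNReal.ofReal (1 - d) := by
  have hinter : Set.Ici d ∩ Set.Icc 0 1 = Set.Icc d 1 := by ext; simp; grind
  rw [Measure.restrict_apply measurableSet_Ici, hinter, Real.volume_Icc]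

theorem MeasureTheory.Measure.pi_setOf_forall_succAbove_mem {α : Type*} [MeasurableSpace α]
    (ν : Measure α) [SigmaFinite ν] {m : ℕ} (i : Fin (m + 1)) (S : Fin m → α → Set α)
    (hS : ∀ j, MeasurableSet {p : α × α | p.2 ∈ S j p.1}) :
    Measure.pi (fun _ => ν) {x | ∀ j, x (i.succAbove j) ∈ S j (x i)} =
      ∫⁻ c, ∏ j, ν (S j c) ∂ν := by
  set D : Set (α × (Fin m → α)) := {p | ∀ j, p.2 j ∈ S j p.1}
  have hD : MeasurableSet D := by
    simp only [D, Set.ofPred_forall]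
    exact .iInter fun j => (hS j).preimage (measurable_fst.prodMk (measurable_snd.eval))
  have hslice : ∀ c, Prod.mk c ⁻¹' D = Set.univ.pi fun j => S j c := by
    intro c; ext y; simp [D]
  have hpre : MeasurableEquiv.piFinSuccAbove (fun _ => α) i ⁻¹' D =
      {x | ∀ j, x (i.succAbove j) ∈ S j (x i)} := rfl
  rw [← hpre, (measurePreserving_piFinSuccAbove (fun _ => ν) i).measure_preimage
    hD.nullMeasurableSet, Measure.prod_apply hD]
  simp only [hslice, Measure.pi_pi]

def gapCell {ι : Type*} [DecidableEq ι] (s : ℝ) (i : ι) (A : Finset ι) : Set (ι → ℝ) :=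
  {x | ∀ j ≠ i, x j ∈ if j ∈ A then Set.Iic (x i) else Set.Ici (x i + s)}

theorem measurableSet_gapCell {ι : Type*} [Countable ι] [DecidableEq ι] (s : ℝ) (i : ι)
    (A : Finset ι) : MeasurableSet (gapCell s i A) := by
  simp only [gapCell, Set.ofPred_forall]
  refine .iInter fun j => .iInter fun _ => ?_
  split_ifs
  · exact measurableSet_le (measurable_pi_apply j) (measurable_pi_apply i)
  · exact measurableSet_le (by fun_prop) (measurable_pi_apply j)

theorem card_filter_succAbove_mem {m : ℕ} {i : Fin (m + 1)} {A : Finset (Fin (m + 1))}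
    (hiA : i ∉ A) : #{j | i.succAbove j ∈ A} = #A := by
  have hpre : ({j | i.succAbove j ∈ A} : Finset (Fin m)) =
      A.preimage i.succAbove Fin.succAbove_right_injective.injOn := by
    ext j; simp
  rw [hpre, card_preimage, filter_true_of_mem fun a ha => ?_]
  rw [Fin.range_succAbove]
  exact fun h => hiA (h ▸ ha)

theorem measure_pi_gapCell {m : ℕ} (i : Fin (m + 1)) {A : Finset (Fin (m + 1))} (hiA : i ∉ A)
    (hAm : #A < m) {s : ℝ} (hs0 : 0 ≤ s) (hs1 : s ≤ 1) :
    Measure.pi (fun _ => volume.restrict (Set.Icc (0 : ℝ) 1)) (gapCell s i A) =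
      ENNReal.ofReal ((1 - s) ^ (m + 1) * ((#A)! * (m - #A)! / (m + 1)!)) := by
  set S : Fin m → ℝ → Set ℝ := fun j c =>
    if i.succAbove j ∈ A then Set.Iic c else Set.Ici (c + s)
  have hcell : gapCell s i A = {x | ∀ j, x (i.succAbove j) ∈ S j (x i)} := by
    ext x
    simp [gapCell, S, Fin.forall_iff_succAbove i, Fin.succAbove_ne]
  have hS : ∀ j, MeasurableSet {p : ℝ × ℝ | p.2 ∈ S j p.1} := by
    intro j
    simp only [S]
    split_ifs
    · exact measurableSet_le measurable_snd measurable_fst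
    · exact measurableSet_le (by fun_prop) measurable_snd
  have hprod : Set.EqOn (fun c => ∏ j, volume.restrict (Set.Icc (0 : ℝ) 1) (S j c))
      (fun c => ENNReal.ofReal c ^ #A * ENNReal.ofReal (1 - s - c) ^ (m - #A)) (Set.Icc 0 1) := by
    intro c hc
    simp only [S, apply_ite (volume.restrict (Set.Icc (0 : ℝ) 1)),
      volume_restrict_Icc_Iic hc.2, volume_restrict_Icc_Ici (add_nonneg hc.1 hs0),
      prod_ite, prod_const, card_filter_succAbove_mem hiA, filter_not]
    rw [card_sdiff_of_subset (filter_subset _ _), card_filter_succAbove_mem hiA, Finset.card_univ,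
      Fintype.card_fin, add_comm c s, ← sub_sub]
  rw [hcell, Measure.pi_setOf_forall_succAbove_mem _ i S hS,
    setLIntegral_congr_fun measurableSet_Icc hprod,
    setLIntegral_Icc_ofReal_pow_mul_ofReal_pow _ _ (by omega) hs0 hs1, add_tsub_cancel_of_le hAm.le]

theorem mem_gapCell_of_monotone {n : ℕ} {x y : Fin n → ℝ} {σ : Equiv.Perm (Fin n)}
    (hy : Monotone y) (hσ : ∀ i, y i = x (σ i)) {k l : Fin n} (hkl : (k : ℕ) + 1 = l)
    {s : ℝ} (hgap : y k + s ≤ y l) :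
    x ∈ gapCell s (σ k) ((Iio k).map σ.toEmbedding) := by
  intro j hj
  have hxj : x j = y (σ.symm j) := by rw [hσ, Equiv.apply_symm_apply]
  rw [hxj, ← hσ]
  simp only [mem_map_equiv, Finset.mem_Iio]
  split_ifs with hlt
  · exact hy hlt.le
  · have hne : σ.symm j ≠ k := fun h => hj (by rw [← h, Equiv.apply_symm_apply])
    have hle : l ≤ σ.symm j := by
      rw [Fin.le_def]
      have := Fin.val_ne_of_ne hne
      rw [Fin.lt_def] at hlt
      omega
    exact hgap.trans (hy hle)

theorem succ_mul_choose_mul_factorial_div_factorial {m k : ℕ} (hk : k ≤ m) :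
    ((m + 1) * m.choose k : ℝ) * (k ! * (m - k)! / (m + 1)!) = 1 := by
  have h := Nat.choose_mul_factorial_mul_factorial hk
  rw [mul_div_assoc', div_eq_one_iff_eq (by positivity), Nat.factorial_succ]
  exact_mod_cast by rw [← h]; ring

theorem measure_orderStatistic_gap_le {Ω : Type*} [MeasurableSpace Ω] {μ : Measure Ω}
    [IsProbabilityMeasure μ] {m : ℕ} (X Y : Fin (m + 1) → Ω → ℝ)
    (hmeas : ∀ i, Measurable (X i)) (hindep : iIndepFun X μ)
    (hunif : ∀ i, Measure.map (X i) μ = volume.restrict (Set.Icc (0 : ℝ) 1))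
    (hsorted : ∀ ω, Monotone fun i => Y i ω)
    (hperm : ∀ ω, ∃ σ : Equiv.Perm (Fin (m + 1)), ∀ i, Y i ω = X (σ i) ω)
    {k l : Fin (m + 1)} (hkl : (k : ℕ) + 1 = l) {s : ℝ} (hs0 : 0 ≤ s) (hs1 : s ≤ 1) :
    μ {ω | Y k ω + s ≤ Y l ω} ≤ ENNReal.ofReal ((1 - s) ^ (m + 1)) := by
  set cells := univ.sigma fun i : Fin (m + 1) => powersetCard k (univ.erase i)
  set Xvec : Ω → Fin (m + 1) → ℝ := fun ω j => X j ω
  have hXvec : Measurable Xvec := measurable_pi_lambda _ hmeas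
  have hjoint : μ.map Xvec = Measure.pi fun _ => volume.restrict (Set.Icc (0 : ℝ) 1) := by
    simp only [Xvec, hindep.map_fun_eq_pi_map fun i => (hmeas i).aemeasurable, hunif]
  have hcover :
      {ω | Y k ω + s ≤ Y l ω} ⊆ ⋃ p ∈ cells, Xvec ⁻¹' gapCell s p.1 p.2 := by
    intro ω hω
    obtain ⟨σ, hσ⟩ := hperm ω
    refine Set.mem_biUnion (x := ⟨σ k, (Iio k).map σ.toEmbedding⟩) ?_
      (mem_gapCell_of_monotone (hsorted ω) hσ hkl hω)
    simp [cells, mem_powersetCard, subset_erase]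
  have hcell : ∀ p ∈ cells, μ (Xvec ⁻¹' gapCell s p.1 p.2) =
      ENNReal.ofReal ((1 - s) ^ (m + 1) * (k ! * (m - k)! / (m + 1)!)) := by
    rintro ⟨i, A⟩ hp
    simp only [cells, mem_sigma, mem_univ, true_and, mem_powersetCard, subset_erase] at hp
    rw [← Measure.map_apply hXvec (measurableSet_gapCell _ _ _), hjoint,
      measure_pi_gapCell i hp.1.2 (by omega) hs0 hs1, hp.2]
  calc μ {ω | Y k ω + s ≤ Y l ω}
      ≤ ∑ p ∈ cells, μ (Xvec ⁻¹' gapCell s p.1 p.2) :=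
        (measure_mono hcover).trans (measure_biUnion_finset_le _ _)
    _ = ENNReal.ofReal ((1 - s) ^ (m + 1)) := by
        have hcard : #cells = (m + 1) * m.choose k := by
          simp [cells, card_sigma, card_powersetCard, mul_comm]
        rw [sum_congr rfl hcell, sum_const, hcard, nsmul_eq_mul, ← ENNReal.ofReal_natCast,
          ← ENNReal.ofReal_mul (by positivity)]
        congr 1
        push_cast
        linear_combination (1 - s) ^ (m + 1) *
          succ_mul_choose_mul_factorial_div_factorial (Nat.le_of_lt_succ k.isLt)

/-- Let `n ≥ 2`, let `X 0, …, X (n-1)` be i.i.d. uniform on `[0,1]` and let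
`Y` be their order statistics. Fix any real `α` with `4 < α < n/2` and any integer `t`
with `1 ≤ t ≤ n/2`. Then `Pr[y_{t+1} < y_t + α/n] ≥ 1 − exp(−α/4)`. -/
theorem stmt_2
    {Ω : Type*} [MeasurableSpace Ω] {μ : Measure Ω} [IsProbabilityMeasure μ]
    {n : ℕ}
    (X Y : Fin n → Ω → ℝ)
    (hmeas : ∀ i, Measurable (X i))
    (hindep : iIndepFun X μ)
    (hunif : ∀ i, Measure.map (X i) μ = volume.restrict (Set.Icc (0 : ℝ) 1))
    (hsorted : ∀ ω, Monotone fun i => Y i ω)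
    (hperm : ∀ ω, ∃ σ : Equiv.Perm (Fin n), ∀ i, Y i ω = X (σ i) ω)
    (α : ℝ) (hα4 : 4 < α) (hαn : α < n / 2)
    (t : ℕ) (ht1 : 1 ≤ t) (ht2 : 2 * t ≤ n) :
    ENNReal.ofReal (1 - Real.exp (-α / 4)) ≤
      μ {ω | Y ⟨t, by omega⟩ ω < Y ⟨t - 1, by omega⟩ ω + α / n} := by
  obtain ⟨m, rfl⟩ : ∃ m, n = m + 1 := ⟨n - 1, by omega⟩
  have hpos : (0 : ℝ) < (m + 1 : ℕ) := by positivity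
  have hgap := measure_orderStatistic_gap_le X Y hmeas hindep hunif hsorted hperm
    (k := ⟨t - 1, by omega⟩) (l := ⟨t, by omega⟩) (by simp; omega) (s := α / (m + 1 : ℕ))
    (by positivity) (by rw [div_le_one hpos]; linarith)
  have hexp : (1 - α / (m + 1 : ℕ)) ^ (m + 1) ≤ Real.exp (-α / 4) :=
    (Real.one_sub_div_pow_le_exp_neg (by linarith)).trans (Real.exp_le_exp.2 (by linarith))
  have hcompl : {ω | Y ⟨t, by omega⟩ ω < Y ⟨t - 1, by omega⟩ ω + α / (m + 1 : ℕ)}ᶜ =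
      {ω | Y ⟨t - 1, by omega⟩ ω + α / (m + 1 : ℕ) ≤ Y ⟨t, by omega⟩ ω} := by
    ext ω; simp
  have hsplit := measure_univ_le_add_compl (μ := μ)
    {ω | Y ⟨t, by omega⟩ ω < Y ⟨t - 1, by omega⟩ ω + α / (m + 1 : ℕ)}
  rw [measure_univ, hcompl] at hsplit
  rw [ENNReal.ofReal_sub _ (Real.exp_nonneg _), ENNReal.ofReal_one, tsub_le_iff_right]
  exact hsplit.trans (add_le_add_right (hgap.trans (ENNReal.ofReal_le_ofReal hexp)) _)
end

section
/- Let R be a nonempty finite set, let ε > 0, ℓ > 0, and δ ∈ [0, 1/2). Let f, g : R → ℝ, and suppose there exist subsets R_f ⊆ R and R_g ⊆ R with |R_f| > (1−δ)·|R| and |R_g| > (1−δ)·|R| such that |f(r) − g(r)| ≤ ℓ for every r ∈ R_f ∩ R_g. Let r be uniformly distributed on R and let Z be an independent random variable with distribution Lap(ℓ/ε). Then for every measurable set S ⊆ ℝ: Pr[f(r) + Z ∈ S] ≤ e^ε · Pr[g(r) + Z ∈ S] + 2(1 + e^ε)·δ. -/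
/-!
Conditioning on the uniform random string, each probability is an average over `x ∈ R` of the
Laplace mass of a translate of `S`. Translating the density of `Lap(ℓ/ε)` by at most `ℓ` changes
it pointwise by a factor at most `e^ε`, so the terms with `x ∈ R_f ∩ R_g` are controlled by the
corresponding terms for `g`; the remaining terms have total weight `|(R_f ∩ R_g)ᶜ| / |R| < 2δ`.
-/

open MeasureTheory ProbabilityTheory

/-- `laplace b` is the Laplace distribution on `ℝ` with scale `b`, i.e., the measure with
density `x ↦ (1/(2b))·exp(−|x|/b)` with respect to Lebesgue measure. -/
noncomputable def laplace (b : ℝ) : Measure ℝ :=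
  volume.withDensity fun x => ENNReal.ofReal ((2 * b)⁻¹ * Real.exp (-|x| / b))

open Finset
open scoped ENNReal

lemma laplace_density_add_le {b : ℝ} (hb : 0 < b) (x t : ℝ) :
    ENNReal.ofReal ((2 * b)⁻¹ * Real.exp (-|x + t| / b)) ≤
      ENNReal.ofReal (Real.exp (|t| / b)) * ENNReal.ofReal ((2 * b)⁻¹ * Real.exp (-|x| / b)) := by
  rw [← ENNReal.ofReal_mul (Real.exp_nonneg _), mul_left_comm, ← Real.exp_add]
  gcongr
  rw [← add_div]
  gcongr
  have h := abs_add_le (x + t) (-t)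
  rw [abs_neg, add_neg_cancel_right] at h
  linarith

theorem laplace_preimage_const_add_le {b : ℝ} (hb : 0 < b) (c c' : ℝ) {S : Set ℝ}
    (hS : MeasurableSet S) :
    laplace b ((c + ·) ⁻¹' S) ≤
      ENNReal.ofReal (Real.exp (|c - c'| / b)) * laplace b ((c' + ·) ⁻¹' S) := by
  set d : ℝ → ℝ≥0∞ := fun x => ENNReal.ofReal ((2 * b)⁻¹ * Real.exp (-|x| / b))
  have hd : Measurable d := by fun_prop
  have hpre : (· + (c' - c)) ⁻¹' ((c + ·) ⁻¹' S) = (c' + ·) ⁻¹' S := by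
    ext y; simp only [Set.mem_preimage]; ring_nf
  calc laplace b ((c + ·) ⁻¹' S)
      = ∫⁻ z in (c + ·) ⁻¹' S, d z ∂(volume.map (· + (c' - c))) := by
        rw [map_add_right_eq_self, laplace, withDensity_apply _ (measurable_const_add c hS)]
    _ = ∫⁻ y in (c' + ·) ⁻¹' S, d (y + (c' - c)) := by
        rw [setLIntegral_map (measurable_const_add c hS) hd (measurable_add_const _), hpre]
    _ ≤ ∫⁻ y in (c' + ·) ⁻¹' S, ENNReal.ofReal (Real.exp (|c - c'| / b)) * d y :=
        lintegral_mono fun y => abs_sub_comm c' c ▸ laplace_density_add_le hb y (c' - c)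
    _ = _ := by
        rw [lintegral_const_mul _ hd, laplace, withDensity_apply _ (measurable_const_add c' hS)]

theorem measure_mem_eq_sum_map_mul_map {Ω R E : Type*} [MeasurableSpace Ω] [Fintype R]
    [MeasurableSpace R] [MeasurableSingletonClass R] [MeasurableSpace E] {μ : Measure Ω}
    {r : Ω → R} {Z : Ω → E} (hr : Measurable r) (hZ : Measurable Z) (hindep : IndepFun r Z μ)
    {T : R → Set E} (hT : ∀ x, MeasurableSet (T x)) :
    μ {ω | Z ω ∈ T (r ω)} = ∑ x, μ.map r {x} * μ.map Z (T x) := by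
  have hunion : {ω | Z ω ∈ T (r ω)} = ⋃ x, r ⁻¹' {x} ∩ Z ⁻¹' T x := by
    ext ω; simp
  rw [hunion, measure_iUnion, tsum_fintype]
  · refine sum_congr rfl fun x _ => ?_
    rw [hindep.measure_inter_preimage_eq_mul _ _ (measurableSet_singleton x) (hT x),
      Measure.map_apply hr (measurableSet_singleton x), Measure.map_apply hZ (hT x)]
  · exact fun i j hij => ((Set.disjoint_singleton.2 hij).preimage r).mono
      Set.inter_subset_left Set.inter_subset_left
  · exact fun x => (hr (measurableSet_singleton x)).inter (hZ (hT x))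

theorem sum_mul_le_mul_sum_add_sum_compl {ι : Type*} [Fintype ι] [DecidableEq ι]
    (w p q : ι → ℝ≥0∞) (c : ℝ≥0∞) (G : Finset ι) (hp : ∀ x, p x ≤ 1)
    (hpq : ∀ x ∈ G, p x ≤ c * q x) :
    ∑ x, w x * p x ≤ c * ∑ x, w x * q x + ∑ x ∈ Gᶜ, w x := by
  rw [← sum_add_sum_compl G]
  gcongr
  · calc ∑ x ∈ G, w x * p x ≤ ∑ x ∈ G, c * (w x * q x) :=
          sum_le_sum fun x hx => by rw [mul_left_comm]; gcongr; exact hpq x hx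
      _ ≤ c * ∑ x, w x * q x := by
          rw [← mul_sum]; gcongr; exact subset_univ G
  · exact mul_le_of_le_one_right' (hp _)

theorem card_compl_inter_le {R : Type*} [Fintype R] [DecidableEq R] {δ : ℝ} (s t : Finset R)
    (hs : (1 - δ) * Fintype.card R < #s) (ht : (1 - δ) * Fintype.card R < #t) :
    (#(s ∩ t)ᶜ : ℝ) ≤ 2 * δ * Fintype.card R := by
  have hunion : (#(s ∪ t) : ℝ) ≤ Fintype.card R := by exact_mod_cast card_le_univ _
  have hincl : (#(s ∪ t) : ℝ) + #(s ∩ t) = #s + #t := by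
    exact_mod_cast card_union_add_card_inter s t
  rw [card_compl, Nat.cast_sub (card_le_univ _)]
  linarith

theorem uniformOfFintype_toMeasure_compl_inter_le {R : Type*} [Fintype R] [DecidableEq R]
    [Nonempty R] [MeasurableSpace R] [MeasurableSingletonClass R] {δ : ℝ}
    (s t : Finset R) (hs : (1 - δ) * Fintype.card R < #s)
    (ht : (1 - δ) * Fintype.card R < #t) :
    (PMF.uniformOfFintype R).toMeasure ↑(s ∩ t)ᶜ ≤ ENNReal.ofReal (2 * δ) := by
  rw [PMF.toMeasure_uniformOfFintype_apply _ (Finset.measurableSet _)]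
  simp only [Finset.coe_sort_coe, Fintype.card_coe]
  refine ENNReal.div_le_of_le_mul ?_
  rw [← ENNReal.ofReal_natCast, ← ENNReal.ofReal_natCast (Fintype.card R),
    ← ENNReal.ofReal_mul' (Nat.cast_nonneg _)]
  exact ENNReal.ofReal_le_ofReal (card_compl_inter_le s t hs ht)

theorem stmt_6_general
    {Ω : Type*} [MeasurableSpace Ω] {μ : Measure Ω} [IsProbabilityMeasure μ]
    {R : Type*} [Fintype R] [DecidableEq R] [Nonempty R] [MeasurableSpace R] [MeasurableSingletonClass R]
    (ε ℓ δ : ℝ) (hε : 0 < ε) (hℓ : 0 < ℓ) (hδ0 : 0 ≤ δ)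
    (f g : R → ℝ) (Rf Rg : Finset R)
    (hRf : (1 - δ) * (Fintype.card R : ℝ) < (Rf.card : ℝ))
    (hRg : (1 - δ) * (Fintype.card R : ℝ) < (Rg.card : ℝ))
    (hsens : ∀ x ∈ Rf ∩ Rg, |f x - g x| ≤ ℓ)
    (r : Ω → R) (Z : Ω → ℝ) (hr : Measurable r) (hZ : Measurable Z)
    (hrunif : Measure.map r μ = (PMF.uniformOfFintype R).toMeasure)
    (hZlap : Measure.map Z μ = laplace (ℓ / ε))
    (hindep : IndepFun r Z μ)
    (S : Set ℝ) (hS : MeasurableSet S) :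
    μ {ω | f (r ω) + Z ω ∈ S} ≤
      ENNReal.ofReal (Real.exp ε) * μ {ω | g (r ω) + Z ω ∈ S} +
        ENNReal.ofReal (2 * (1 + Real.exp ε) * δ) := by
  have hb : 0 < ℓ / ε := div_pos hℓ hε
  have hlaw (h : R → ℝ) : μ {ω | h (r ω) + Z ω ∈ S} =
      ∑ x, μ.map r {x} * laplace (ℓ / ε) ((h x + ·) ⁻¹' S) := by
    rw [← hZlap]
    exact measure_mem_eq_sum_map_mul_map hr hZ hindep fun x => measurable_const_add _ hS
  have hprob : IsProbabilityMeasure (laplace (ℓ / ε)) :=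
    hZlap ▸ Measure.isProbabilityMeasure_map hZ.aemeasurable
  have hshift (x : R) (hx : x ∈ Rf ∩ Rg) :
      laplace (ℓ / ε) ((f x + ·) ⁻¹' S) ≤
        ENNReal.ofReal (Real.exp ε) * laplace (ℓ / ε) ((g x + ·) ⁻¹' S) := by
    refine (laplace_preimage_const_add_le hb (f x) (g x) hS).trans ?_
    gcongr
    rw [div_div_eq_mul_div, div_le_iff₀ hℓ]
    nlinarith [hsens x hx]
  calc μ {ω | f (r ω) + Z ω ∈ S}
      = ∑ x, μ.map r {x} * laplace (ℓ / ε) ((f x + ·) ⁻¹' S) := hlaw f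
    _ ≤ ENNReal.ofReal (Real.exp ε) * ∑ x, μ.map r {x} * laplace (ℓ / ε) ((g x + ·) ⁻¹' S) +
          ∑ x ∈ (Rf ∩ Rg)ᶜ, μ.map r {x} :=
        sum_mul_le_mul_sum_add_sum_compl _ _ _ _ _ (fun _ => prob_le_one) hshift
    _ ≤ ENNReal.ofReal (Real.exp ε) * μ {ω | g (r ω) + Z ω ∈ S} + ENNReal.ofReal (2 * δ) := by
        rw [hlaw g, sum_measure_singleton, hrunif]
        gcongr
        exact uniformOfFintype_toMeasure_compl_inter_le Rf Rg hRf hRg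
    _ ≤ _ := by
        gcongr
        nlinarith [Real.exp_pos ε]

/-- Laplace mechanism for `(ℓ,δ)`-sensitive values. Let `R` be a nonempty
finite set, `ε > 0`, `ℓ > 0`, `δ ∈ [0, 1/2)`, and `f, g : R → ℝ`. Suppose there are
`R_f, R_g ⊆ R` with `|R_f| > (1−δ)·|R|` and `|R_g| > (1−δ)·|R|` such that
`|f(r) − g(r)| ≤ ℓ` for all `r ∈ R_f ∩ R_g`. Let `r` be uniform on `R` and `Z` an
independent `Lap(ℓ/ε)` random variable. Then for every measurable `S ⊆ ℝ`:
`Pr[f(r) + Z ∈ S] ≤ e^ε · Pr[g(r) + Z ∈ S] + 2(1 + e^ε)·δ`. -/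
theorem stmt_6
    {Ω : Type*} [MeasurableSpace Ω] {μ : Measure Ω} [IsProbabilityMeasure μ]
    {R : Type*} [Fintype R] [DecidableEq R] [Nonempty R] [MeasurableSpace R] [MeasurableSingletonClass R]
    (ε ℓ δ : ℝ) (hε : 0 < ε) (hℓ : 0 < ℓ) (hδ0 : 0 ≤ δ) (hδ1 : δ < 1 / 2)
    (f g : R → ℝ) (Rf Rg : Finset R)
    (hRf : (1 - δ) * (Fintype.card R : ℝ) < (Rf.card : ℝ))
    (hRg : (1 - δ) * (Fintype.card R : ℝ) < (Rg.card : ℝ))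
    (hsens : ∀ x ∈ Rf ∩ Rg, |f x - g x| ≤ ℓ)
    (r : Ω → R) (Z : Ω → ℝ) (hr : Measurable r) (hZ : Measurable Z)
    (hrunif : Measure.map r μ = (PMF.uniformOfFintype R).toMeasure)
    (hZlap : Measure.map Z μ = laplace (ℓ / ε))
    (hindep : IndepFun r Z μ)
    (S : Set ℝ) (hS : MeasurableSet S) :
    μ {ω | f (r ω) + Z ω ∈ S} ≤
      ENNReal.ofReal (Real.exp ε) * μ {ω | g (r ω) + Z ω ∈ S} +
        ENNReal.ofReal (2 * (1 + Real.exp ε) * δ) :=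
  stmt_6_general ε ℓ δ hε hℓ hδ0 f g Rf Rg hRf hRg hsens r Z hr hZ hrunif hZlap hindep S hS
end

section
/- Let x_1, …, x_n be independent random variables, each with distribution Lap(b) for some b > 0, and let 0 < δ ≤ 1. Set M = b·ln(n/δ). Then for every t > 0: Pr[ x_1 + ⋯ + x_n > t ] ≤ exp( − (t²/2) / (2·n·b² + M·t/3) ) + δ. -/
open MeasureTheory ProbabilityTheory

/-!
Put `D = 2nb² + Mt/3`. The moment generating function of `Lap(b)` is `(1 - s²b²)⁻¹` for
`|s| < 1/b`. If `3tb² ≤ MD`, the Chernoff bound at `s = t/D` gives `exp(-t²/(2D))`: then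
`1 - s²b² ≥ 2nb²/D`, and `(1 - u)⁻¹ ≤ exp(u/(1 - u))` turns the product of the `n` moment
generating functions into `exp(t²/(2D))`. Otherwise `t ≥ n(M - b log 2)`, and the union bound
over the events `x_i > t/n`, each of probability `exp(-t/(nb))/2`, gives at most `δ`.
-/

open Real Set

noncomputable def laplacePDF (b x : ℝ) : ℝ := (2 * b)⁻¹ * exp (-|x| / b)

lemma laplace_eq_withDensity (b : ℝ) :
    laplace b = volume.withDensity fun x => ENNReal.ofReal (laplacePDF b x) := rfl

lemma laplacePDF_nonneg {b : ℝ} (hb : 0 ≤ b) (x : ℝ) : 0 ≤ laplacePDF b x := by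
  unfold laplacePDF; positivity

lemma laplacePDF_mul_exp_of_nonpos (b s : ℝ) {x : ℝ} (hx : x ≤ 0) :
    laplacePDF b x * exp (s * x) = (2 * b)⁻¹ * exp ((s + b⁻¹) * x) := by
  rw [laplacePDF, abs_of_nonpos hx, mul_assoc, ← exp_add]
  ring_nf

lemma laplacePDF_mul_exp_of_nonneg (b s : ℝ) {x : ℝ} (hx : 0 ≤ x) :
    laplacePDF b x * exp (s * x) = (2 * b)⁻¹ * exp ((s - b⁻¹) * x) := by
  rw [laplacePDF, abs_of_nonneg hx, mul_assoc, ← exp_add]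
  ring_nf

lemma integrable_laplacePDF_mul_exp {b s : ℝ} (hs : |s| < b⁻¹) :
    Integrable fun x => laplacePDF b x * exp (s * x) := by
  have hleft : IntegrableOn (fun x => laplacePDF b x * exp (s * x)) (Iic 0) :=
    IntegrableOn.congr_fun ((integrableOn_exp_mul_Iic (by linarith [neg_abs_le s]) 0).const_mul _)
      (fun _ hx => (laplacePDF_mul_exp_of_nonpos b s hx).symm) measurableSet_Iic
  have hright : IntegrableOn (fun x => laplacePDF b x * exp (s * x)) (Ioi 0) :=
    IntegrableOn.congr_fun ((integrableOn_exp_mul_Ioi (by linarith [le_abs_self s]) 0).const_mul _)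
      (fun _ hx => (laplacePDF_mul_exp_of_nonneg b s (le_of_lt hx)).symm) measurableSet_Ioi
  rw [← integrableOn_univ, ← Iic_union_Ioi (a := (0 : ℝ))]
  exact hleft.union hright

lemma integral_laplacePDF_mul_exp {b s : ℝ} (hb : 0 < b) (hs : |s| < b⁻¹) :
    ∫ x, laplacePDF b x * exp (s * x) = (1 - s ^ 2 * b ^ 2)⁻¹ := by
  have hint := integrable_laplacePDF_mul_exp hs
  have hlo : 0 < s + b⁻¹ := by linarith [neg_abs_le s]
  have hhi : s - b⁻¹ < 0 := by linarith [le_abs_self s]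
  rw [← intervalIntegral.integral_Iic_add_Ioi hint.integrableOn hint.integrableOn,
    setIntegral_congr_fun measurableSet_Iic fun _ hx => laplacePDF_mul_exp_of_nonpos b s hx,
    setIntegral_congr_fun measurableSet_Ioi fun _ hx =>
      laplacePDF_mul_exp_of_nonneg b s (le_of_lt hx),
    integral_const_mul, integral_const_mul, integral_exp_mul_Iic hlo, integral_exp_mul_Ioi hhi]
  have hsb : |s * b| < 1 := by rwa [abs_mul, abs_of_pos hb, ← lt_div_iff₀ hb, one_div]
  obtain ⟨hsb_lo, hsb_hi⟩ := abs_lt.mp hsb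
  simp only [mul_zero, exp_zero]
  rw [show s + b⁻¹ = (1 + s * b) / b by field_simp; ring,
    show s - b⁻¹ = -((1 - s * b) / b) by field_simp; ring,
    show 1 - s ^ 2 * b ^ 2 = (1 + s * b) * (1 - s * b) by ring]
  generalize s * b = u at hsb_lo hsb_hi ⊢
  have : 1 + u ≠ 0 := by linarith
  have : 1 - u ≠ 0 := by linarith
  field_simp
  ring

lemma mgf_laplace {b s : ℝ} (hb : 0 < b) (hs : |s| < b⁻¹) :
    mgf id (laplace b) s = (1 - s ^ 2 * b ^ 2)⁻¹ := by
  rw [mgf, laplace_eq_withDensity, integral_withDensity_eq_integral_toReal_smul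
    (by unfold laplacePDF; fun_prop) (ae_of_all _ fun _ => ENNReal.ofReal_lt_top)]
  simp_rw [ENNReal.toReal_ofReal (laplacePDF_nonneg hb.le _), smul_eq_mul, id]
  exact integral_laplacePDF_mul_exp hb hs

lemma laplace_Ioi {b a : ℝ} (hb : 0 < b) (ha : 0 ≤ a) :
    laplace b (Ioi a) = ENNReal.ofReal (exp (-a / b) / 2) := by
  have hpdf : EqOn (laplacePDF b) (fun x => (2 * b)⁻¹ * exp (-b⁻¹ * x)) (Ioi a) :=
    fun x hx => by simpa using laplacePDF_mul_exp_of_nonneg b 0 (ha.trans (le_of_lt hx))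
  have hneg : -b⁻¹ < 0 := by simpa using hb
  rw [laplace_eq_withDensity, withDensity_apply _ measurableSet_Ioi,
    ← ofReal_integral_eq_lintegral_ofReal
      (IntegrableOn.congr_fun ((integrableOn_exp_mul_Ioi hneg a).const_mul _) hpdf.symm
        measurableSet_Ioi)
      (ae_of_all _ (laplacePDF_nonneg hb.le)),
    setIntegral_congr_fun measurableSet_Ioi hpdf, integral_const_mul, integral_exp_mul_Ioi hneg]
  congr 1
  field_simp

lemma measure_sum_ge_le_of_laplace {ι Ω : Type*} [Fintype ι] [MeasurableSpace Ω]
    {μ : Measure Ω} {X : ι → Ω → ℝ} (hX : ∀ i, Measurable (X i)) (hindep : iIndepFun X μ)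
    {b : ℝ} (hb : 0 < b) (hmap : ∀ i, μ.map (X i) = laplace b)
    {s : ℝ} (hs0 : 0 ≤ s) (hsb : s * b < 1) (t : ℝ) :
    μ {ω | t ≤ ∑ i, X i ω} ≤
      ENNReal.ofReal (exp (-s * t) * ((1 - s ^ 2 * b ^ 2)⁻¹) ^ Fintype.card ι) := by
  have := hindep.isProbabilityMeasure
  have hs : |s| < b⁻¹ := by rwa [abs_of_nonneg hs0, ← one_div, lt_div_iff₀ hb]
  have hmgf : ∀ i, mgf (X i) μ s = (1 - s ^ 2 * b ^ 2)⁻¹ := fun i => by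
    rw [← mgf_id_map (hX i).aemeasurable, hmap i, mgf_laplace hb hs]
  have hint : ∀ i, Integrable (fun ω => exp (s * X i ω)) μ := fun i =>
    mgf_pos_iff.mp <| by rw [hmgf]; exact inv_pos.mpr (by nlinarith [mul_nonneg hs0 hb.le])
  have hchernoff := measure_ge_le_exp_mul_mgf t hs0
    (hindep.integrable_exp_mul_sum hX (s := Finset.univ) fun i _ => hint i)
  rw [← ofReal_measureReal (measure_ne_top _ _)]
  refine ENNReal.ofReal_le_ofReal ?_
  simpa [hindep.mgf_sum hX, hmgf] using hchernoff

lemma measure_lt_sum_le_sum_measure {ι Ω : Type*} [Fintype ι] [Nonempty ι] [MeasurableSpace Ω]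
    (μ : Measure Ω) (X : ι → Ω → ℝ) (t : ℝ) :
    μ {ω | t < ∑ i, X i ω} ≤ ∑ i, μ {ω | t / Fintype.card ι < X i ω} := by
  refine (measure_mono fun ω (hω : t < ∑ i, X i ω) => ?_).trans (measure_iUnion_fintype_le μ _)
  have hsum : ∑ _i : ι, t / Fintype.card ι = t := by
    rw [Finset.sum_const, Finset.card_univ, nsmul_eq_mul, mul_div_cancel₀]
    exact_mod_cast Fintype.card_ne_zero
  obtain ⟨i, -, hi⟩ := Finset.exists_lt_of_sum_lt (hsum.symm ▸ hω)
  exact mem_iUnion.mpr ⟨i, hi⟩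

lemma measure_sum_gt_le_of_laplace {ι Ω : Type*} [Fintype ι] [Nonempty ι] [MeasurableSpace Ω]
    {μ : Measure Ω} {X : ι → Ω → ℝ} (hX : ∀ i, Measurable (X i))
    {b : ℝ} (hb : 0 < b) (hmap : ∀ i, μ.map (X i) = laplace b) {t : ℝ} (ht : 0 ≤ t) :
    μ {ω | t < ∑ i, X i ω} ≤
      ENNReal.ofReal (Fintype.card ι * (exp (-(t / Fintype.card ι) / b) / 2)) := by
  have htail : ∀ i, μ {ω | t / Fintype.card ι < X i ω} =
      ENNReal.ofReal (exp (-(t / Fintype.card ι) / b) / 2) := fun i => by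
    rw [← laplace_Ioi hb (by positivity), ← hmap i, Measure.map_apply (hX i) measurableSet_Ioi]
    rfl
  refine (measure_lt_sum_le_sum_measure μ X t).trans_eq ?_
  rw [Finset.sum_congr rfl fun i _ => htail i, Finset.sum_const, Finset.card_univ, nsmul_eq_mul,
    ENNReal.ofReal_mul (by positivity), ENNReal.ofReal_natCast]

lemma inv_one_sub_le_exp_div {u : ℝ} (hu : u < 1) : (1 - u)⁻¹ ≤ exp (u / (1 - u)) := by
  have h : (1 - u)⁻¹ = u / (1 - u) + 1 := by field_simp [(sub_pos.mpr hu).ne']; ring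
  rw [h]
  exact add_one_le_exp _

lemma sq_mul_sq_mul_le_sub_of_le {n b M t D s : ℝ} (hs0 : 0 ≤ s) (hst : s * D = t)
    (hD : D = 2 * n * b ^ 2 + M * t / 3) (hreg : 3 * t * b ^ 2 ≤ M * D) :
    s ^ 2 * b ^ 2 * D ≤ D - 2 * n * b ^ 2 := calc
  s ^ 2 * b ^ 2 * D = s * (3 * t * b ^ 2) / 3 := by rw [← hst]; ring
  _ ≤ s * (M * D) / 3 := by gcongr
  _ = D - 2 * n * b ^ 2 := by rw [mul_left_comm, hst, hD]; ring

lemma exp_neg_mul_mul_inv_one_sub_pow_le {n : ℕ} {b s t D : ℝ} (hn : 0 < n) (hb : 0 < b)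
    (hD : 0 < D) (hst : s * D = t) (hu : s ^ 2 * b ^ 2 * D ≤ D - 2 * n * b ^ 2) :
    exp (-s * t) * ((1 - s ^ 2 * b ^ 2)⁻¹) ^ n ≤ exp (-(t ^ 2 / 2) / D) := by
  have hn' : (0 : ℝ) < n := by exact_mod_cast hn
  have hgap : 2 * n * b ^ 2 / D ≤ 1 - s ^ 2 * b ^ 2 := by
    rw [div_le_iff₀ hD]; linarith
  have hgap_pos : 0 < 2 * n * b ^ 2 / D := by positivity
  have hexponent : n * (s ^ 2 * b ^ 2 / (1 - s ^ 2 * b ^ 2)) ≤ t ^ 2 / (2 * D) := calc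
    n * (s ^ 2 * b ^ 2 / (1 - s ^ 2 * b ^ 2)) ≤ n * (s ^ 2 * b ^ 2 / (2 * n * b ^ 2 / D)) := by
      gcongr
    _ = t ^ 2 / (2 * D) := by rw [← hst]; field_simp
  calc exp (-s * t) * ((1 - s ^ 2 * b ^ 2)⁻¹) ^ n
      ≤ exp (-s * t) * exp (s ^ 2 * b ^ 2 / (1 - s ^ 2 * b ^ 2)) ^ n := by
        gcongr
        · exact inv_nonneg.mpr (hgap_pos.trans_le hgap).le
        · exact inv_one_sub_le_exp_div (by linarith)
    _ = exp (-s * t + n * (s ^ 2 * b ^ 2 / (1 - s ^ 2 * b ^ 2))) := by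
        rw [← exp_nat_mul, exp_add]
    _ ≤ exp (-s * t + t ^ 2 / (2 * D)) := by gcongr
    _ = exp (-(t ^ 2 / 2) / D) := by congr 1; rw [← hst]; field_simp; ring

lemma sub_mul_log_two_mul_le {b M : ℝ} (hb : 0 ≤ b) (hM : 0 ≤ M) (hMb : M ^ 2 ≤ 9 * b ^ 2) :
    (M - b * log 2) * (9 * b ^ 2 - M ^ 2) ≤ 6 * M * b ^ 2 := by
  have hlog := log_two_gt_d9
  rcases le_or_gt (M ^ 2) (3 * b ^ 2) with hsmall | hlarge
  · nlinarith [mul_nonneg (sq_nonneg (M - b)) (by linarith : 0 ≤ M + 2 * b),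
      mul_nonneg (mul_nonneg hb (by linarith : (0 : ℝ) ≤ 9 * b ^ 2 - M ^ 2))
        (by linarith : (0 : ℝ) ≤ log 2 - 1 / 3)]
  · nlinarith [mul_nonneg hM (by linarith : (0 : ℝ) ≤ M ^ 2 - 3 * b ^ 2),
      mul_nonneg (mul_nonneg hb (by linarith : (0 : ℝ) ≤ 9 * b ^ 2 - M ^ 2))
        (by linarith : (0 : ℝ) ≤ log 2)]

lemma mul_sub_mul_log_two_le {n b M t : ℝ} (hn : 0 ≤ n) (hb : 0 < b) (hM : 0 ≤ M) (ht : 0 < t)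
    (h : M * (2 * n * b ^ 2 + M * t / 3) < 3 * t * b ^ 2) : n * (M - b * log 2) ≤ t := by
  have hkey : 6 * n * M * b ^ 2 < t * (9 * b ^ 2 - M ^ 2) := by linear_combination 3 * h
  rcases le_or_gt (M - b * log 2) 0 with hle | hpos
  · nlinarith
  have h9 : 0 < 9 * b ^ 2 - M ^ 2 :=
    pos_of_mul_pos_right ((by positivity : 0 ≤ 6 * n * M * b ^ 2).trans_lt hkey) ht.le
  refine le_of_mul_le_mul_right ?_ h9
  nlinarith [mul_le_mul_of_nonneg_left (sub_mul_log_two_mul_le hb.le hM (by linarith)) hn]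

lemma mul_exp_neg_div_div_two_le {n b δ M t : ℝ} (hn : 0 < n) (hb : 0 < b) (hδ : 0 < δ)
    (hM : M = b * log (n / δ)) (h : n * (M - b * log 2) ≤ t) :
    n * (exp (-(t / n) / b) / 2) ≤ δ := by
  have hexponent : -(t / n) / b ≤ log 2 - log (n / δ) := by
    rw [div_le_iff₀ hb, neg_le, le_div_iff₀ hn]
    subst hM
    linarith
  calc n * (exp (-(t / n) / b) / 2) ≤ n * (exp (log 2 - log (n / δ)) / 2) := by gcongr
    _ = δ := by
      rw [exp_sub, exp_log two_pos, exp_log (by positivity)]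
      field_simp

theorem stmt_10_general
    {Ω : Type*} [MeasurableSpace Ω] {μ : Measure Ω}
    {n : ℕ} (hn : 0 < n)
    (b : ℝ) (hb : 0 < b)
    (X : Fin n → Ω → ℝ) (hX : ∀ i, Measurable (X i))
    (hindep : iIndepFun X μ)
    (hmap : ∀ i, Measure.map (X i) μ = laplace b)
    (δ : ℝ) (hδ0 : 0 < δ) (hδ1 : δ ≤ 1)
    (M : ℝ) (hM : M = b * Real.log (n / δ))
    (t : ℝ) (ht : 0 < t) :
    μ {ω | t < ∑ i, X i ω} ≤
      ENNReal.ofReal (Real.exp (-(t ^ 2 / 2) / (2 * n * b ^ 2 + M * t / 3)) + δ) := by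
  have hn' : (0 : ℝ) < n := by exact_mod_cast hn
  have hM0 : 0 ≤ M := hM ▸ mul_nonneg hb.le (log_nonneg <| by
    rw [le_div_iff₀ hδ0, one_mul]; exact hδ1.trans (by exact_mod_cast hn))
  set D := 2 * (n : ℝ) * b ^ 2 + M * t / 3 with hD_def
  have hD : 0 < D := by positivity
  have hexp_nonneg := (exp_pos (-(t ^ 2 / 2) / D)).le
  have : Nonempty (Fin n) := ⟨⟨0, hn⟩⟩
  rcases le_or_gt (3 * t * b ^ 2) (M * D) with hreg | hreg
  · set s := t / D
    have hst : s * D = t := div_mul_cancel₀ t hD.ne'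
    have hs0 : 0 ≤ s := by positivity
    have hu := sq_mul_sq_mul_le_sub_of_le hs0 hst hD_def hreg
    have hsb : s * b < 1 := by
      have : (s * b) ^ 2 < 1 := by nlinarith [(by positivity : 0 < 2 * n * b ^ 2)]
      nlinarith [mul_nonneg hs0 hb.le]
    calc μ {ω | t < ∑ i, X i ω} ≤ μ {ω | t ≤ ∑ i, X i ω} :=
          measure_mono fun ω (h : t < _) => h.le
      _ ≤ ENNReal.ofReal (exp (-s * t) * ((1 - s ^ 2 * b ^ 2)⁻¹) ^ n) := by
        simpa using measure_sum_ge_le_of_laplace hX hindep hb hmap hs0 hsb t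
      _ ≤ _ := ENNReal.ofReal_le_ofReal <|
        (exp_neg_mul_mul_inv_one_sub_pow_le hn hb hD hst hu).trans (by linarith)
  · calc μ {ω | t < ∑ i, X i ω} ≤ ENNReal.ofReal (n * (exp (-(t / n) / b) / 2)) := by
          simpa using measure_sum_gt_le_of_laplace hX hb hmap ht.le
      _ ≤ _ := ENNReal.ofReal_le_ofReal <|
          (mul_exp_neg_div_div_two_le hn' hb hδ0 hM
            (mul_sub_mul_log_two_le hn'.le hb hM0 ht hreg)).trans (by linarith)

/-- Let `x_1, …, x_n` be independent random variables, each with distribution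
`Lap(b)` for some `b > 0`, and let `0 < δ ≤ 1`. Set `M = b·ln(n/δ)`. Then for every `t > 0`:
`Pr[x_1 + ⋯ + x_n > t] ≤ exp(−(t²/2)/(2·n·b² + M·t/3)) + δ`. -/
theorem stmt_10
    {Ω : Type*} [MeasurableSpace Ω] {μ : Measure Ω} [IsProbabilityMeasure μ]
    {n : ℕ} (hn : 0 < n)
    (b : ℝ) (hb : 0 < b)
    (X : Fin n → Ω → ℝ) (hX : ∀ i, Measurable (X i))
    (hindep : iIndepFun X μ)
    (hmap : ∀ i, Measure.map (X i) μ = laplace b)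
    (δ : ℝ) (hδ0 : 0 < δ) (hδ1 : δ ≤ 1)
    (M : ℝ) (hM : M = b * Real.log (n / δ))
    (t : ℝ) (ht : 0 < t) :
    μ {ω | t < ∑ i, X i ω} ≤
      ENNReal.ofReal (Real.exp (-(t ^ 2 / 2) / (2 * n * b ^ 2 + M * t / 3)) + δ) :=
  stmt_10_general hn b hb X hX hindep hmap δ hδ0 hδ1 M hM t ht
end

section
/- Let x_1, …, x_n be independent random variables, each with distribution Lap(b) for some b > 0. Then for every δ with 0 < δ ≤ 1: Pr[ x_1 + ⋯ + x_n > max{ √(4·n·b²·ln(3/δ)), (2/3)·b·ln(3n/δ)·ln(3/δ) } ] ≤ δ. -/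
/-!
The moment generating function of `Lap(b)` is `(1 - t²b²)⁻¹` for `|t| < 1/b`. With `L = log (3/δ)`
the threshold is `b P`, where `P = max (2√(nL)) ((2/3) L (L + log n))`, so the Chernoff bound at
`t = x/b` bounds the probability by `exp (-x P) (1 - x²)⁻ⁿ`, and it suffices to find `x ∈ [0, 1)`
with `L - log 3 + n log (1 - x²)⁻¹ ≤ x P`. Take `x = 1/2` if `n ≤ 4L` and `x = √(L/n)` otherwise.
In the second case `n log (1 - x²)⁻¹ ≈ L` and `x · 2√(nL) = 2L`, and the slack `log 3` absorbs the
second-order term unless `L² > 1.3 n`, where the term `(2/3) L (L + log n)` takes over.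
-/

open MeasureTheory ProbabilityTheory Real Set

section Laplace

variable {b t : ℝ}

lemma laplace_density_mul_exp_of_nonpos (hb : 0 < b) {x : ℝ} (hx : x ≤ 0) :
    (2 * b)⁻¹ * exp (-|x| / b) * exp (t * x) = (2 * b)⁻¹ * exp ((t + b⁻¹) * x) := by
  rw [abs_of_nonpos hx, mul_assoc, ← exp_add]
  field_simp
  ring_nf

lemma laplace_density_mul_exp_of_pos (hb : 0 < b) {x : ℝ} (hx : 0 < x) :
    (2 * b)⁻¹ * exp (-|x| / b) * exp (t * x) = (2 * b)⁻¹ * exp ((t - b⁻¹) * x) := by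
  rw [abs_of_pos hx, mul_assoc, ← exp_add]
  field_simp
  ring_nf

lemma integrableOn_laplace_density_mul_exp_Iic (hb : 0 < b) (ht : -b⁻¹ < t) :
    IntegrableOn (fun x => (2 * b)⁻¹ * exp (-|x| / b) * exp (t * x)) (Iic 0) :=
  IntegrableOn.congr_fun ((integrableOn_exp_mul_Iic (a := t + b⁻¹) (by linarith) 0).const_mul _)
    (fun _ hx => (laplace_density_mul_exp_of_nonpos hb hx).symm) measurableSet_Iic

lemma integrableOn_laplace_density_mul_exp_Ioi (hb : 0 < b) (ht : t < b⁻¹) :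
    IntegrableOn (fun x => (2 * b)⁻¹ * exp (-|x| / b) * exp (t * x)) (Ioi 0) :=
  IntegrableOn.congr_fun ((integrableOn_exp_mul_Ioi (a := t - b⁻¹) (by linarith) 0).const_mul _)
    (fun _ hx => (laplace_density_mul_exp_of_pos hb hx).symm) measurableSet_Ioi

lemma integral_laplace_density_mul_exp (hb : 0 < b) (ht : |t| < b⁻¹) :
    ∫ x, (2 * b)⁻¹ * exp (-|x| / b) * exp (t * x) = (1 - (t * b) ^ 2)⁻¹ := by
  obtain ⟨ht₁, ht₂⟩ := abs_lt.1 ht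
  rw [← intervalIntegral.integral_Iic_add_Ioi (integrableOn_laplace_density_mul_exp_Iic hb ht₁)
      (integrableOn_laplace_density_mul_exp_Ioi hb ht₂),
    setIntegral_congr_fun measurableSet_Iic (fun _ hx => laplace_density_mul_exp_of_nonpos hb hx),
    setIntegral_congr_fun measurableSet_Ioi (fun _ hx => laplace_density_mul_exp_of_pos hb hx),
    integral_const_mul, integral_const_mul, integral_exp_mul_Iic (by linarith),
    integral_exp_mul_Ioi (by linarith)]
  have hbt : |b * t| < 1 := by
    rw [abs_mul, abs_of_pos hb, ← mul_inv_cancel₀ hb.ne']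
    exact mul_lt_mul_of_pos_left ht hb
  have h₁ : 0 < 1 + b * t := by linarith [(abs_lt.1 hbt).1]
  have h₂ : 0 < 1 - b * t := by linarith [(abs_lt.1 hbt).2]
  have h₃ : 1 - (t * b) ^ 2 = (1 + b * t) * (1 - b * t) := by ring
  rw [h₃, show t + b⁻¹ = (1 + b * t) / b by field_simp; ring,
    show t - b⁻¹ = -((1 - b * t) / b) by field_simp; ring]
  simp only [mul_zero, exp_zero]
  field_simp
  ring

lemma integrable_laplace_density_mul_exp (hb : 0 < b) (ht : |t| < b⁻¹) :
    Integrable (fun x => (2 * b)⁻¹ * exp (-|x| / b) * exp (t * x)) := by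
  obtain ⟨ht₁, ht₂⟩ := abs_lt.1 ht
  rw [← integrableOn_univ, ← Iic_union_Ioi (a := 0)]
  exact (integrableOn_laplace_density_mul_exp_Iic hb ht₁).union
    (integrableOn_laplace_density_mul_exp_Ioi hb ht₂)

lemma measurable_laplace_density (b : ℝ) :
    Measurable fun x => ENNReal.ofReal ((2 * b)⁻¹ * exp (-|x| / b)) := by
  fun_prop

lemma laplace_density_toReal_smul_exp (hb : 0 < b) (x : ℝ) :
    (ENNReal.ofReal ((2 * b)⁻¹ * exp (-|x| / b))).toReal • exp (t * x) =
      (2 * b)⁻¹ * exp (-|x| / b) * exp (t * x) := by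
  rw [ENNReal.toReal_ofReal (by positivity), smul_eq_mul]

lemma integrable_exp_mul_laplace (hb : 0 < b) (ht : |t| < b⁻¹) :
    Integrable (fun x => exp (t * x)) (laplace b) := by
  rw [laplace, integrable_withDensity_iff_integrable_smul' (measurable_laplace_density b)
    (ae_of_all _ fun _ => ENNReal.ofReal_lt_top)]
  simpa only [laplace_density_toReal_smul_exp hb] using integrable_laplace_density_mul_exp hb ht

lemma mgf_id_laplace (hb : 0 < b) (ht : |t| < b⁻¹) :
    mgf id (laplace b) t = (1 - (t * b) ^ 2)⁻¹ := by
  rw [mgf, laplace, integral_withDensity_eq_integral_toReal_smul (measurable_laplace_density b)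
    (ae_of_all _ fun _ => ENNReal.ofReal_lt_top)]
  simpa only [id, laplace_density_toReal_smul_exp hb] using integral_laplace_density_mul_exp hb ht

end Laplace

lemma measureReal_sum_ge_le_of_laplace {ι Ω : Type*} [Fintype ι] [MeasurableSpace Ω]
    {μ : Measure Ω} {X : ι → Ω → ℝ} {b t : ℝ} (hX : ∀ i, Measurable (X i))
    (hindep : iIndepFun X μ) (hmap : ∀ i, μ.map (X i) = laplace b) (hb : 0 < b)
    (ht₀ : 0 ≤ t) (ht : t < b⁻¹) (ε : ℝ) :
    μ.real {ω | ε ≤ ∑ i, X i ω} ≤ exp (-t * ε) * ((1 - (t * b) ^ 2)⁻¹) ^ Fintype.card ι := by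
  have := hindep.isProbabilityMeasure
  have habs : |t| < b⁻¹ := abs_lt.2 ⟨by linarith [inv_pos.2 hb], ht⟩
  have hmgf : ∀ i, mgf (X i) μ t = (1 - (t * b) ^ 2)⁻¹ := fun i => by
    rw [← mgf_id_map (hX i).aemeasurable, hmap i, mgf_id_laplace hb habs]
  have hint : ∀ i, Integrable (fun ω => exp (t * X i ω)) μ := fun i => by
    have h := integrable_exp_mul_laplace hb habs
    rw [← hmap i] at h
    exact (integrable_map_measure (by fun_prop) (hX i).aemeasurable).1 h
  have h := measure_ge_le_exp_mul_mgf ε ht₀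
    (hindep.integrable_exp_mul_sum hX (s := Finset.univ) fun i _ => hint i)
  rw [hindep.mgf_sum hX, Finset.prod_congr rfl fun i _ => hmgf i, Finset.prod_const,
    Finset.card_univ] at h
  simpa only [Finset.sum_apply] using h

lemma log_four_thirds_lt : log (4 / 3) < 0.2877 := by
  rw [log_div (by norm_num) (by norm_num), show (4 : ℝ) = 2 ^ 2 by norm_num, log_pow]
  push_cast
  linarith [log_two_lt_d9, log_three_gt_d9]

lemma log_inv_one_sub_le {u : ℝ} (h0 : 0 ≤ u) (h1 : u ≤ 1 / 4) :
    log (1 - u)⁻¹ ≤ u + 5 / 6 * u ^ 2 := by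
  have hu : |u| < 1 := by rw [abs_of_nonneg h0]; linarith
  have h : |u + u ^ 2 / 2 + log (1 - u)| ≤ u ^ 3 / (1 - u) := by
    simpa [Finset.sum_range_succ, abs_of_nonneg h0, one_add_one_eq_two] using
      abs_log_sub_add_sum_range_le hu 2
  have h3 : u ^ 3 / (1 - u) ≤ u ^ 2 / 3 := by
    rw [div_le_iff₀ (by linarith)]
    nlinarith [sq_nonneg u]
  rw [log_inv]
  linarith [(abs_le.1 h).1]

lemma sub_log_three_add_mul_log_four_thirds_le_sqrt_mul {N L : ℝ} (hN : 1 ≤ N)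
    (hL : log 3 ≤ L) (hL5 : L < 5) (h3 : 3 * L - 3 < N) (h4 : N ≤ 4 * L) :
    L - log 3 + N * log (4 / 3) ≤ √(N * L) := by
  have hq0 : 0 ≤ log (4 / 3) := log_nonneg (by norm_num)
  have hq := log_four_thirds_lt
  have hl3 := log_three_gt_d9
  apply le_sqrt_of_sq_le
  have hs0 : 0 ≤ L - log 3 + N * log (4 / 3) := by nlinarith
  have hs : L - log 3 + N * log (4 / 3) ≤ L - 1.0986 + 0.2877 * N := by nlinarith
  have key : (L - 1.0986 + 0.2877 * N) ^ 2 ≤ N * L := by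
    rcases le_total L (4 / 3) with h | h
    · nlinarith [mul_nonneg (sub_nonneg.2 hN) (sub_nonneg.2 h4)]
    · nlinarith [mul_nonneg (sub_nonneg.2 h3.le) (sub_nonneg.2 h4),
        mul_nonneg (sub_nonneg.2 h) (sub_nonneg.2 hL5.le)]
  nlinarith

lemma sub_log_three_add_mul_log_four_thirds_le_mul_add_log {n : ℕ} {L : ℝ} (hn : 0 < n)
    (hL : log 3 ≤ L) (h : (n : ℝ) ≤ 3 * L - 3 ∨ (5 ≤ L ∧ (n : ℝ) ≤ 4 * L)) :
    L - log 3 + n * log (4 / 3) ≤ L * (L + log n) / 3 := by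
  have hq := log_four_thirds_lt
  have hq0 : 0 ≤ log (4 / 3) := log_nonneg (by norm_num)
  have hl3 := log_three_gt_d9
  have hL0 : 0 < L := by linarith
  obtain rfl | rfl | hn3 : n = 1 ∨ n = 2 ∨ 3 ≤ n := by omega
  · simp only [Nat.cast_one, log_one]
    nlinarith [sq_nonneg (L - 3 / 2)]
  · have hl2 := log_two_gt_d9
    push_cast
    nlinarith [sq_nonneg (L - 1.15), mul_le_mul_of_nonneg_left hl2.le hL0.le]
  · have hN3 : (3 : ℝ) ≤ n := by exact_mod_cast hn3
    have hlog : 1.0986 * L ≤ L * log n := by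
      nlinarith [log_le_log (by norm_num) hN3]
    rcases h with h | ⟨h5, h4⟩
    · nlinarith [mul_le_mul_of_nonneg_right h hq0, sq_nonneg (L - 2.245)]
    · nlinarith [mul_le_mul_of_nonneg_right h4 hq0]

lemma sub_log_three_add_mul_log_inv_one_sub_div_le {N L : ℝ} (hL : log 3 ≤ L)
    (h4 : 4 * L < N) :
    L - log 3 + N * log (1 - L / N)⁻¹ ≤
      √(L / N) * max (2 * √(N * L)) (2 / 3 * L * (L + log N)) := by
  have hl3 := log_three_gt_d9
  have hL0 : 0 < L := by linarith
  have hN0 : 0 < N := by linarith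
  set x := √(L / N) with hx
  have hx0 : 0 ≤ x := sqrt_nonneg _
  have hx2 : x ^ 2 = L / N := sq_sqrt (by positivity)
  have hpen : N * log (1 - L / N)⁻¹ ≤ L + 5 / 6 * (L ^ 2 / N) := by
    have h := log_inv_one_sub_le (div_nonneg hL0.le hN0.le)
      (by rw [div_le_iff₀ hN0]; linarith)
    calc N * log (1 - L / N)⁻¹ ≤ N * (L / N + 5 / 6 * (L / N) ^ 2) := by gcongr
      _ = L + 5 / 6 * (L ^ 2 / N) := by field_simp
  rcases le_or_gt (L ^ 2) (1.3 * N) with hsmall | hsmall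
  · have hxs : x * (2 * √(N * L)) = 2 * L := by
      rw [hx, mul_left_comm, ← sqrt_mul (by positivity), show L / N * (N * L) = L ^ 2 by
        field_simp, sqrt_sq hL0.le]
    have : L ^ 2 / N ≤ 1.3 := by rw [div_le_iff₀ hN0]; linarith
    calc L - log 3 + N * log (1 - L / N)⁻¹ ≤ 2 * L := by linarith
      _ = x * (2 * √(N * L)) := hxs.symm
      _ ≤ _ := by gcongr; exact le_max_left _ _
  · have hN16 : 16 ≤ N := by nlinarith
    have hlogN : 2.77 ≤ log N := by
      have := log_le_log (by norm_num) hN16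
      rw [show (16 : ℝ) = 2 ^ 4 by norm_num, log_pow] at this
      push_cast at this
      linarith [log_two_gt_d9]
    have hLN : L ^ 2 / N ≤ L / 4 := by
      rw [div_le_iff₀ hN0]; nlinarith
    have hxlog : 3.5 ≤ x * (L + log N) := by
      have hsq : 3.5 ^ 2 ≤ (x * (L + log N)) ^ 2 := by
        rw [mul_pow, hx2, div_mul_eq_mul_div, le_div_iff₀ hN0]
        nlinarith [sq_nonneg (L - log N)]
      nlinarith [mul_nonneg hx0 (by linarith : 0 ≤ L + log N)]
    calc L - log 3 + N * log (1 - L / N)⁻¹ ≤ 2 / 3 * L * 3.5 := by linarith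
      _ ≤ 2 / 3 * L * (x * (L + log N)) := by gcongr
      _ = x * (2 / 3 * L * (L + log N)) := by ring
      _ ≤ _ := by gcongr; exact le_max_right _ _

lemma sub_log_three_add_mul_log_four_thirds_le_half_mul_max {n : ℕ} {L : ℝ} (hn : 0 < n)
    (hL : log 3 ≤ L) (h4 : (n : ℝ) ≤ 4 * L) :
    L - log 3 + n * log (4 / 3) ≤ 1 / 2 * max (2 * √(n * L)) (2 / 3 * L * (L + log n)) := by
  rw [mul_max_of_nonneg _ _ (by norm_num)]
  by_cases h : (n : ℝ) ≤ 3 * L - 3 ∨ 5 ≤ L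
  · have := sub_log_three_add_mul_log_four_thirds_le_mul_add_log hn hL
      (h.imp_right fun h5 => ⟨h5, h4⟩)
    exact le_max_of_le_right (by linarith)
  · obtain ⟨h3, h5⟩ := not_or.1 h
    have := sub_log_three_add_mul_log_four_thirds_le_sqrt_mul (by exact_mod_cast hn) hL
      (not_le.1 h5) (not_le.1 h3) h4
    exact le_max_of_le_left (by linarith)

lemma exists_exp_neg_mul_max_mul_inv_pow_le {n : ℕ} {L : ℝ} (hn : 0 < n) (hL : log 3 ≤ L) :
    ∃ x, 0 ≤ x ∧ x < 1 ∧
      exp (-(x * max (2 * √(n * L)) (2 / 3 * L * (L + log n)))) * ((1 - x ^ 2)⁻¹) ^ n ≤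
        exp (log 3 - L) := by
  suffices ∃ x, 0 ≤ x ∧ x < 1 ∧
      L - log 3 + n * log (1 - x ^ 2)⁻¹ ≤ x * max (2 * √(n * L)) (2 / 3 * L * (L + log n)) by
    obtain ⟨x, hx0, hx1, hx⟩ := this
    refine ⟨x, hx0, hx1, ?_⟩
    have hpos : 0 < (1 - x ^ 2)⁻¹ := inv_pos.2 (by nlinarith)
    rw [← exp_log (pow_pos hpos n), ← exp_add, exp_le_exp, log_pow]
    linarith
  rcases le_or_gt (n : ℝ) (4 * L) with h | h
  · refine ⟨1 / 2, by norm_num, by norm_num, ?_⟩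
    rw [show (1 - (1 / 2 : ℝ) ^ 2)⁻¹ = 4 / 3 by norm_num]
    exact sub_log_three_add_mul_log_four_thirds_le_half_mul_max hn hL h
  · have hN : 0 < (n : ℝ) := by exact_mod_cast hn
    have hL0 : 0 ≤ L := (log_nonneg (by norm_num)).trans hL
    have hLn : L / n < 1 := by rw [div_lt_one hN]; linarith
    refine ⟨√(L / n), sqrt_nonneg _, (sqrt_lt' one_pos).2 (by simpa using hLn), ?_⟩
    rw [sq_sqrt (div_nonneg hL0 hN.le)]
    exact sub_log_three_add_mul_log_inv_one_sub_div_le hL h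

lemma max_sqrt_mul_log_eq_mul_max {n b δ : ℝ} (hn : 0 < n) (hb : 0 ≤ b) (hδ : 0 < δ) :
    max (√(4 * n * b ^ 2 * log (3 / δ))) (2 / 3 * b * log (3 * n / δ) * log (3 / δ)) =
      b * max (2 * √(n * log (3 / δ))) (2 / 3 * log (3 / δ) * (log (3 / δ) + log n)) := by
  rw [show 4 * n * b ^ 2 * log (3 / δ) = (2 * b) ^ 2 * (n * log (3 / δ)) by ring,
    sqrt_mul (sq_nonneg _), sqrt_sq (by positivity),
    show 3 * n / δ = 3 / δ * n by ring, log_mul (by positivity) hn.ne',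
    mul_max_of_nonneg _ _ hb]
  ring_nf

/-- Let `x_1, …, x_n` be independent random variables, each with distribution
`Lap(b)` for some `b > 0`. Then for every `δ` with `0 < δ ≤ 1`:
`Pr[x_1 + ⋯ + x_n > max{√(4·n·b²·ln(3/δ)), (2/3)·b·ln(3n/δ)·ln(3/δ)}] ≤ δ`. -/
theorem stmt_11
    {Ω : Type*} [MeasurableSpace Ω] {μ : Measure Ω} [IsProbabilityMeasure μ]
    {n : ℕ} (hn : 0 < n)
    (b : ℝ) (hb : 0 < b)
    (X : Fin n → Ω → ℝ) (hX : ∀ i, Measurable (X i))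
    (hindep : iIndepFun X μ)
    (hmap : ∀ i, Measure.map (X i) μ = laplace b)
    (δ : ℝ) (hδ0 : 0 < δ) (hδ1 : δ ≤ 1) :
    μ {ω | max (Real.sqrt (4 * n * b ^ 2 * Real.log (3 / δ)))
          ((2 / 3) * b * Real.log (3 * n / δ) * Real.log (3 / δ)) < ∑ i, X i ω} ≤
      ENNReal.ofReal δ := by
  rw [max_sqrt_mul_log_eq_mul_max (by exact_mod_cast hn) hb.le hδ0]
  set L := log (3 / δ)
  have hL : log 3 ≤ L := log_le_log (by norm_num) (by rw [le_div_iff₀ hδ0]; linarith)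
  have hδL : exp (log 3 - L) = δ := by
    rw [show L = log 3 - log δ from log_div (by norm_num) hδ0.ne', sub_sub_cancel, exp_log hδ0]
  obtain ⟨x, hx0, hx1, hx⟩ := exists_exp_neg_mul_max_mul_inv_pow_le hn hL
  set P := max (2 * √(n * L)) (2 / 3 * L * (L + log n))
  have hchernoff := measureReal_sum_ge_le_of_laplace hX hindep hmap hb
    (div_nonneg hx0 hb.le) ((div_lt_iff₀ hb).2 (by rwa [inv_mul_cancel₀ hb.ne'])) (b * P)
  rw [Fintype.card_fin, div_mul_cancel₀ x hb.ne',
    show -(x / b) * (b * P) = -(x * P) by field_simp] at hchernoff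
  calc μ {ω | b * P < ∑ i, X i ω} ≤ μ {ω | b * P ≤ ∑ i, X i ω} :=
        measure_mono (ofPred_subset_ofPred.2 fun _ => le_of_lt)
    _ = ENNReal.ofReal (μ.real {ω | b * P ≤ ∑ i, X i ω}) := (ofReal_measureReal).symm
    _ ≤ ENNReal.ofReal δ := ENNReal.ofReal_le_ofReal (hchernoff.trans (hx.trans_eq hδL))
end
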